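/- Let $G_0$ and $G_0'$ be probability measures on $\mathbb{R}$ and let $q : \mathbb{R} \to \mathbb{R}^d$ be measurable with components nondegenerate under $G_0$ (for every nonzero $c \in \mathbb{R}^d$, the function $y \mapsto c^{\top} q(y)$ is not $G_0$-almost-everywhere equal to a constant). Assume the zero-mean identifiability constraints $\int q\, dG_0 = 0$ and $\int q\, dG_0' = 0$. Let $\beta, \beta' \in \mathbb{R}^d$ be such that $\int e^{\beta''^{\top} q(y)}\|q(y)\|^2\, dG_0(y) < \infty$ and $\int e^{\beta''^{\top} q(y)}\, dG_0(y) < \infty$ for all $\beta''$ in an open convex set containing the segment between $\beta$ and $\beta'$, and define the normalizing constants $\alpha = -\log \int e^{\beta^{\top} q(y)}\, dG_0(y)$ and $\alpha' = -\log \int e^{\beta'^{\top} q(y)}\, dG_0'(y)$. If the exponentially tilted measures coincide, i.e. $e^{\alpha + \beta^{\top} q(y)}\, dG_0(y) = e^{\alpha' + \beta'^{\top} q(y)}\, dG_0'(y)$ as measures on $\mathbb{R}$, then $\beta = \beta'$ and $G_0 = G_0'$. -/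

import Mathlib

open MeasureTheory Real
open scoped InnerProductSpace

/-- The exponentially tilted measure `e^{α + β^⊤ q(y)} dG(y)`. -/
noncomputable def drmTilt {d : ℕ} (G : Measure ℝ) (q : ℝ → EuclideanSpace ℝ (Fin d))
    (α : ℝ) (β : EuclideanSpace ℝ (Fin d)) : Measure ℝ :=
  G.withDensity fun y => ENNReal.ofReal (Real.exp (α + ⟪β, q y⟫_ℝ))

/-!
Write `G₀' = e^{c + f} G₀` with `c = α - α'` and `f = ⟪β - β', q⟫`. Both baselines centre `q`,
so `∫ f dG₀ = 0` and `∫ e^{c+f} f dG₀ = 0`; subtracting `e^c` times the first from the second gives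
`∫ f (e^{c+f} - e^c) dG₀ = 0`. The integrand is nonnegative because `exp` is increasing, hence
`f = 0` almost everywhere, which by nondegeneracy forces `β = β'`. Then `G₀' = e^c G₀`, and
comparing total masses gives `e^c = 1`.
-/

namespace MeasureTheory

variable {Ω : Type*} [MeasurableSpace Ω] {μ ν : Measure Ω}

theorem eq_withDensity_exp_sub_of_withDensity_exp_eq {a b : Ω → ℝ} (ha : AEMeasurable a μ)
    (hb : AEMeasurable b μ) (hb' : AEMeasurable b ν)
    (h : μ.withDensity (fun x => ENNReal.ofReal (exp (a x)))
      = ν.withDensity (fun x => ENNReal.ofReal (exp (b x)))) :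
    ν = μ.withDensity (fun x => ENNReal.ofReal (exp (a x - b x))) := by
  have hexp : ∀ {g : Ω → ℝ} {ρ : Measure Ω}, AEMeasurable g ρ →
      AEMeasurable (fun x => ENNReal.ofReal (exp (g x))) ρ :=
    fun hg => hg.exp.ennreal_ofReal
  have hdiv : (fun x => ENNReal.ofReal (exp (a x - b x)))
      = (fun x => ENNReal.ofReal (exp (a x))) * fun x => (ENNReal.ofReal (exp (b x)))⁻¹ := by
    funext x
    rw [Pi.mul_apply, ← ENNReal.ofReal_inv_of_pos (exp_pos _),
      ← ENNReal.ofReal_mul (exp_pos _).le, ← exp_neg, ← exp_add, sub_eq_add_neg]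
  rw [hdiv, withDensity_mul₀ (hexp ha) (hexp hb).fun_inv, h,
    withDensity_inv_same₀ (hexp hb') (.of_forall fun x => by simp [exp_pos])
      (.of_forall fun x => ENNReal.ofReal_ne_top)]

theorem ae_eq_zero_of_integral_eq_zero_of_integral_exp_add_mul_eq_zero {f : Ω → ℝ} (c : ℝ)
    (hf : Integrable f μ) (hef : Integrable (fun x => exp (c + f x) * f x) μ)
    (h0 : ∫ x, f x ∂μ = 0) (h0' : ∫ x, exp (c + f x) * f x ∂μ = 0) : f =ᵐ[μ] 0 := by
  set g : Ω → ℝ := fun x => f x * (exp (c + f x) - exp c)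
  have hg_nonneg : 0 ≤ g := fun x => by
    rcases le_total 0 (f x) with hx | hx
    · exact mul_nonneg hx (sub_nonneg.mpr (exp_le_exp.mpr (by linarith)))
    · exact mul_nonneg_of_nonpos_of_nonpos hx (sub_nonpos.mpr (exp_le_exp.mpr (by linarith)))
  have hg_eq : g = fun x => exp (c + f x) * f x - exp c * f x := by
    funext x; ring
  have hg_int : Integrable g μ := hg_eq ▸ hef.sub (hf.const_mul _)
  have hg_zero : ∫ x, g x ∂μ = 0 := by
    rw [hg_eq, integral_sub hef (hf.const_mul _), integral_const_mul, h0, h0', mul_zero, sub_zero]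
  filter_upwards [(integral_eq_zero_iff_of_nonneg hg_nonneg hg_int).mp hg_zero] with x hx
  rcases mul_eq_zero.mp hx with hfx | hexp
  · exact hfx
  · simpa using exp_injective (sub_eq_zero.mp hexp)

variable {E : Type*} [NormedAddCommGroup E] [InnerProductSpace ℝ E] [CompleteSpace E]

theorem ae_inner_eq_zero_of_integral_eq_zero_of_integral_withDensity_eq_zero {q : Ω → E}
    (γ : E) (c : ℝ) (hq : Integrable q μ)
    (hq' : Integrable q (μ.withDensity fun x => ENNReal.ofReal (exp (c + ⟪γ, q x⟫_ℝ))))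
    (h0 : ∫ x, q x ∂μ = 0)
    (h0' : ∫ x, q x ∂(μ.withDensity fun x => ENNReal.ofReal (exp (c + ⟪γ, q x⟫_ℝ))) = 0) :
    ∀ᵐ x ∂μ, ⟪γ, q x⟫_ℝ = 0 := by
  have hdens : AEMeasurable (fun x => ENNReal.ofReal (exp (c + ⟪γ, q x⟫_ℝ))) μ :=
    (aemeasurable_const.add (hq.const_inner γ).aemeasurable).exp.ennreal_ofReal
  have hfin : ∀ᵐ x ∂μ, ENNReal.ofReal (exp (c + ⟪γ, q x⟫_ℝ)) < ⊤ :=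
    .of_forall fun _ => ENNReal.ofReal_lt_top
  simp only [integrable_withDensity_iff_integrable_smul₀' hdens hfin,
    integral_withDensity_eq_integral_toReal_smul₀ hdens hfin, ENNReal.toReal_ofReal (exp_pos _).le]
    at hq' h0'
  have hinner : (fun x => exp (c + ⟪γ, q x⟫_ℝ) * ⟪γ, q x⟫_ℝ)
      = fun x => ⟪γ, exp (c + ⟪γ, q x⟫_ℝ) • q x⟫_ℝ := by
    funext x; rw [real_inner_smul_right]
  refine ae_eq_zero_of_integral_eq_zero_of_integral_exp_add_mul_eq_zero c (hq.const_inner γ)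
    (hinner ▸ hq'.const_inner γ) ?_ ?_
  · rw [integral_inner hq, h0, inner_zero_right]
  · rw [hinner, integral_inner hq', h0', inner_zero_right]

theorem eq_of_eq_withDensity_of_ae_eq_const [IsProbabilityMeasure μ] [IsProbabilityMeasure ν]
    {g : Ω → ENNReal} {k : ENNReal} (h : ν = μ.withDensity g) (hg : g =ᵐ[μ] fun _ => k) :
    ν = μ := by
  rw [withDensity_congr_ae hg, withDensity_const] at h
  have hk : k = 1 := by simpa using (congrArg (· Set.univ) h).symm
  rw [h, hk, one_smul]

end MeasureTheory

theorem drm_identifiable_general {d : ℕ}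
    (G₀ G₀' : Measure ℝ) [IsProbabilityMeasure G₀] [IsProbabilityMeasure G₀']
    (q : ℝ → EuclideanSpace ℝ (Fin d))
    -- nondegeneracy of the components of `q` under `G₀`
    (hnd : ∀ c : EuclideanSpace ℝ (Fin d), c ≠ 0 → ¬ ∃ r : ℝ, ∀ᵐ y ∂G₀, ⟪c, q y⟫_ℝ = r)
    -- zero-mean identifiability constraints
    (hqi : Integrable q G₀) (hqi' : Integrable q G₀')
    (h0 : ∫ y, q y ∂G₀ = 0) (h0' : ∫ y, q y ∂G₀' = 0)
    (β β' : EuclideanSpace ℝ (Fin d))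
    -- the normalizing constants
    (α α' : ℝ)
    -- the tilted measures coincide
    (heq : drmTilt G₀ q α β = drmTilt G₀' q α' β') :
    β = β' ∧ G₀ = G₀' := by
  have htilt : ∀ {G : Measure ℝ} (a : ℝ) (b : EuclideanSpace ℝ (Fin d)), Integrable q G →
      AEMeasurable (fun y => a + ⟪b, q y⟫_ℝ) G :=
    fun a b hG => aemeasurable_const.add (hG.const_inner b).aemeasurable
  have hG : G₀' = G₀.withDensity fun y => ENNReal.ofReal (exp (α - α' + ⟪β - β', q y⟫_ℝ)) := by
    rw [eq_withDensity_exp_sub_of_withDensity_exp_eq (htilt α β hqi) (htilt α' β' hqi)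
      (htilt α' β' hqi') heq]
    congr with y
    rw [inner_sub_left]
    ring_nf
  have hf : ∀ᵐ y ∂G₀, ⟪β - β', q y⟫_ℝ = 0 :=
    ae_inner_eq_zero_of_integral_eq_zero_of_integral_withDensity_eq_zero _ _ hqi (hG ▸ hqi')
      h0 (hG ▸ h0')
  have hβ : β - β' = 0 := by
    by_contra hne
    exact hnd _ hne ⟨0, hf⟩
  refine ⟨sub_eq_zero.mp hβ, (eq_of_eq_withDensity_of_ae_eq_const (k := ENNReal.ofReal (exp (α - α'))) hG ?_).symm⟩
  filter_upwards [hf] with y hy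
  rw [hy, add_zero]

/-- **Identifiability of the density ratio model** (Theorem 1 of the paper).
Under the zero-mean constraint on the baseline distribution, if two exponentially
tilted measures coincide then the parameters and the baseline distributions coincide. -/
theorem drm_identifiable {d : ℕ}
    (G₀ G₀' : Measure ℝ) [IsProbabilityMeasure G₀] [IsProbabilityMeasure G₀']
    (q : ℝ → EuclideanSpace ℝ (Fin d)) (hq : Measurable q)
    -- nondegeneracy of the components of `q` under `G₀`
    (hnd : ∀ c : EuclideanSpace ℝ (Fin d), c ≠ 0 → ¬ ∃ r : ℝ, ∀ᵐ y ∂G₀, ⟪c, q y⟫_ℝ = r)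
    -- zero-mean identifiability constraints
    (hqi : Integrable q G₀) (hqi' : Integrable q G₀')
    (h0 : ∫ y, q y ∂G₀ = 0) (h0' : ∫ y, q y ∂G₀' = 0)
    (β β' : EuclideanSpace ℝ (Fin d))
    -- integrability on an open convex set containing the segment between `β` and `β'`
    (U : Set (EuclideanSpace ℝ (Fin d)))
    (hU : IsOpen U) (hUc : Convex ℝ U) (hseg : segment ℝ β β' ⊆ U)
    (hm2 : ∀ β'' ∈ U, Integrable (fun y => Real.exp (⟪β'', q y⟫_ℝ) * ‖q y‖ ^ 2) G₀)
    (hm0 : ∀ β'' ∈ U, Integrable (fun y => Real.exp (⟪β'', q y⟫_ℝ)) G₀)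
    -- the normalizing constants
    (α α' : ℝ)
    (hα : α = -Real.log (∫ y, Real.exp (⟪β, q y⟫_ℝ) ∂G₀))
    (hα' : α' = -Real.log (∫ y, Real.exp (⟪β', q y⟫_ℝ) ∂G₀'))
    -- the tilted measures coincide
    (heq : drmTilt G₀ q α β = drmTilt G₀' q α' β') :
    β = β' ∧ G₀ = G₀' :=
  drm_identifiable_general G₀ G₀' q hnd hqi hqi' h0 h0' β β' α α' heq
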